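/- Let π be either player and let Γ and Δ be runs such that Δ is a π-delay of Γ. Then for every infinite bitstring v, the run Δ^{≼v} is a π-delay of the run Γ^{≼v}. -/

import Mathlib

/- ============================================================
   Computability Logic: runs, constant games, delays, static
   games, and the tight/loose toggling-branching recurrences.
   ============================================================ -/

/-- The two players: `top` (⊤, the machine) and `bot` (⊥, the environment). -/
inductive Player : Type
  | top : Player
  | bot : Player
deriving DecidableEq

/-- The adversary (opposite) of a player. -/
def Player.opp : Player → Player
  | .top => .bot
  | .bot => .top

/-- Symbols of the fixed move alphabet: the bits `0` and `1`, the period `.`,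
the colon `:`, and (countably many) other characters. -/
inductive CSym : Type
  | b0 : CSym
  | b1 : CSym
  | dot : CSym
  | colon : CSym
  | ch : ℕ → CSym
deriving DecidableEq

/-- A move is a finite string over the fixed alphabet. -/
abbrev Move := List CSym

/-- A labmove is a move together with the label of the player who made it. -/
abbrev Labmove := Player × Move

/-- A run is a finite or infinite sequence of labmoves. -/
abbrev Run := Stream'.Seq Labmove

/-- A position is a finite run. -/
abbrev Position := List Labmove

/-- The symbol encoding a bit. -/
def bitSym (b : Bool) : CSym := if b then .b1 else .b0

/-- The move that is the bare bitstring `w`. -/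
def bitsMove (w : List Bool) : Move := w.map bitSym

/-- The (replicative-style) move `w:`. -/
def repMove (w : List Bool) : Move := bitsMove w ++ [.colon]

/-- The (non-replicative-style) move `w.α`. -/
def dotMove (w : List Bool) (α : Move) : Move := bitsMove w ++ (.dot :: α)

/-- Decode a move that is a bare bitstring. -/
def asBits : Move → Option (List Bool)
  | [] => some []
  | .b0 :: r => (asBits r).map (false :: ·)
  | .b1 :: r => (asBits r).map (true :: ·)
  | _ => none

/-- Decode a move of the form `w:` (`w` a bitstring). -/
def asRep : Move → Option (List Bool)
  | [.colon] => some []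
  | .b0 :: r => (asRep r).map (false :: ·)
  | .b1 :: r => (asRep r).map (true :: ·)
  | _ => none

/-- Decode a move of the form `w.α` (`w` a bitstring, `α` a move), splitting at
the (unique such) period. -/
def splitDot : Move → Option (List Bool × Move)
  | .dot :: r => some ([], r)
  | .b0 :: r => (splitDot r).map (fun p => (false :: p.1, p.2))
  | .b1 :: r => (splitDot r).map (fun p => (true :: p.1, p.2))
  | _ => none

/-- Infinite bitstrings. -/
abbrev IStr := ℕ → Bool

/-- The length-`n` initial segment of an infinite bitstring. -/
def prefOf (n : ℕ) (v : IStr) : List Bool := (List.range n).map v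

/-- `u` is a finite initial segment of the infinite bitstring `v`. -/
def IsPref (u : List Bool) (v : IStr) : Prop := u = prefOf u.length v

instance (u : List Bool) (v : IStr) : Decidable (IsPref u v) := by
  unfold IsPref; infer_instance

/-- The finite bitstring `w` with infinitely many `0`s appended. -/
def ezero (w : List Bool) : IStr := fun i => w.getD i false

/-- The finite bitstring `w` followed by the infinite bitstring `v`. -/
def capp (w : List Bool) (v : IStr) : IStr :=
  fun i => if i < w.length then w.getD i false else v (i - w.length)

/-- The indices of `s` whose entry is kept by the filtering function `p`. -/
def fmPred {α β : Type*} (p : α → Option β) (s : Stream'.Seq α) (i : ℕ) : Prop :=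
  ∃ a, s.get? i = some a ∧ (p a).isSome

/-- `p` has at least `n+1` witnesses. -/
def HasNth (p : ℕ → Prop) (n : ℕ) : Prop :=
  ∀ hf : (setOf p).Finite, n < hf.toFinset.card

open Classical in
/-- The subsequence of a (finite or infinite) sequence obtained by
filtering/translating its entries through `p`. -/
noncomputable def seqFilterMap {α β : Type*} (p : α → Option β) (s : Stream'.Seq α) :
    Stream'.Seq β := by
  refine ⟨fun k => if HasNth (fmPred p s) k
    then ((s.get? (Nat.nth (fmPred p s) k)).bind p) else none, ?_⟩
  intro n hn
  have hval : ∀ k, HasNth (fmPred p s) k →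
      (if HasNth (fmPred p s) k then ((s.get? (Nat.nth (fmPred p s) k)).bind p) else none)
        ≠ none := by
    intro k hk
    obtain ⟨a, ha, hpa⟩ := Nat.nth_mem (p := fmPred p s) k hk
    rw [if_pos hk, ha]
    simpa [Option.isSome_iff_ne_none] using hpa
  by_cases h : HasNth (fmPred p s) (n + 1)
  · exact absurd hn (hval n (fun hf => lt_of_le_of_lt (Nat.le_succ n) (h hf)))
  · exact if_neg h

/-- The filtered subsequence of a position (finite-run analogue of `seqFilterMap`). -/
def listFilterMap {β : Type*} (p : Labmove → Option β) (Φ : Position) : List β :=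
  Φ.filterMap p

/-- The filtering function for `Ω^{≼v}`: keep labmoves `π u.α` with `u` an initial
segment of `v`, turning them into `π α`. -/
def subFn (v : IStr) (lm : Labmove) : Option Labmove :=
  match splitDot lm.2 with
  | some (u, α) => if IsPref u v then some (lm.1, α) else none
  | none => none

/-- `Ω^{≼v}` for a run `Ω`. -/
noncomputable def subAt (v : IStr) (Γ : Run) : Run := seqFilterMap (subFn v) Γ

/-- `Φ^{≼v}` for a position `Φ`. -/
def subAtL (v : IStr) (Φ : Position) : Position := Φ.filterMap (subFn v)

/-- The result of changing every label in a run to its opposite. -/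
def negRun (Γ : Run) : Run := Γ.map (fun lm => (lm.1.opp, lm.2))

/-- The subsequence of `π`-labeled moves of a run. -/
noncomputable def subseqOf (π : Player) (Γ : Run) : Run :=
  seqFilterMap (fun lm => if lm.1 = π then some lm else none) Γ

/-- The subsequence of `π`-labeled moves of a position. -/
def subL (π : Player) (Φ : Position) : Position :=
  Φ.filter (fun lm => decide (lm.1 = π))

/-- The indices of the `π`-labeled moves of a run. -/
def labPred (π : Player) (Γ : Run) (i : ℕ) : Prop := ∃ m, Γ.get? i = some (π, m)

/-- `Δ` is a `π`-delay of `Γ`: (1) for both players `π'`, the subsequence of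
`π'`-labeled moves of `Δ` is identical to that of `Γ`; (2) whenever the `n`-th
`π`-labeled move is made later than the `k`-th `¬π`-labeled move in `Γ`, so is
it in `Δ`. -/
def Delay (π : Player) (Δ Γ : Run) : Prop :=
  (∀ π' : Player, subseqOf π' Δ = subseqOf π' Γ) ∧
  (∀ n k : ℕ, HasNth (labPred π Γ) n → HasNth (labPred π.opp Γ) k →
    Nat.nth (labPred π Γ) n > Nat.nth (labPred π.opp Γ) k →
    Nat.nth (labPred π Δ) n > Nat.nth (labPred π.opp Δ) k)

/-- A constant game: a set of legal runs and an assignment of winners. -/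
structure Game where
  legal : Run → Prop
  wins : Run → Player

/-- Well-formedness of a constant game: the empty position is legal, and a run
is legal iff all of its finite initial segments are. -/
def Game.IsGame (A : Game) : Prop :=
  A.legal (Stream'.Seq.ofList []) ∧
  ∀ Γ : Run, A.legal Γ ↔ ∀ n : ℕ, A.legal (Stream'.Seq.ofList (Stream'.Seq.take n Γ))

/-- The run `Γ` is `π`-illegal in `A`: its shortest illegal initial segment has
the form `⟨Φ, πα⟩`. -/
def Game.IllegalBy (A : Game) (π : Player) (Γ : Run) : Prop :=
  ∃ n : ℕ,
    (∀ m ≤ n, A.legal (Stream'.Seq.ofList (Stream'.Seq.take m Γ))) ∧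
    ¬ A.legal (Stream'.Seq.ofList (Stream'.Seq.take (n + 1) Γ)) ∧
    ∃ m : Move, Γ.get? n = some (π, m)

/-- `Γ` is a `π`-won run of `A`: either `Γ` is legal and `Wn` names `π`, or `Γ`
is `¬π`-illegal (an illegal run is won by the adversary of the first offender). -/
def Game.won (A : Game) (π : Player) (Γ : Run) : Prop :=
  (A.legal Γ ∧ A.wins Γ = π) ∨ A.IllegalBy π.opp Γ

/-- A constant game is static iff `π`-won runs are preserved by `π`-delays. -/
def Game.Static (A : Game) : Prop :=
  ∀ (π : Player) (Γ Δ : Run), Delay π Δ Γ → A.won π Γ → A.won π Δ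

/-- The negation `¬A` of a constant game: the roles of the players are interchanged. -/
def Game.neg (A : Game) : Game where
  legal Γ := A.legal (negRun Γ)
  wins Γ := (A.wins (negRun Γ)).opp

/-- `w` is an actual node of the position `Φ`: `w` is empty, or `w = u0` or
`w = u1` for some bitstring `u` such that `Φ` contains the move `u:`. -/
def ActualNode (Φ : Position) (w : List Bool) : Prop :=
  w = [] ∨ ∃ (u : List Bool) (b : Bool), w = u ++ [b] ∧ ∃ π : Player, (π, repMove u) ∈ Φ

/-- `w` is an outer actual node of `Φ`: an actual node that is not a proper
prefix of any other actual node of `Φ`. -/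
def OuterNode (Φ : Position) (w : List Bool) : Prop :=
  ActualNode Φ w ∧ ∀ w' : List Bool, ActualNode Φ w' → w <+: w' → w = w'

/-- `m` is a legal move by `π` in the legal position `Φ` of `⫰ᵀA`: a switch
move, a replicative move, or a non-replicative move. -/
def TightMove (A : Game) (Φ : Position) (π : Player) (m : Move) : Prop :=
  (π = .bot ∧ ∃ w : List Bool, asBits m = some w ∧ ActualNode Φ w) ∨
  (π = .bot ∧ ∃ w : List Bool, asRep m = some w ∧ OuterNode Φ w) ∨
  (∃ (w : List Bool) (α : Move), splitDot m = some (w, α) ∧ ActualNode Φ w ∧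
    ∀ v : IStr, A.legal (Stream'.Seq.ofList (subAtL (capp w v) Φ ++ [(π, α)])))

/-- The legal positions of `⫰ᵀA`. -/
inductive TightLegalPos (A : Game) : Position → Prop
  | nil : TightLegalPos A []
  | snoc {Φ : Position} {π : Player} {m : Move} :
      TightLegalPos A Φ → TightMove A Φ π m → TightLegalPos A (Φ ++ [(π, m)])

/-- The indices of the switch moves (by player `π`) of a run: `π`-labeled moves
whose move part is a bare bitstring. -/
def SwSetP (π : Player) (Γ : Run) : Set ℕ :=
  {i | ∃ (m : Move) (w : List Bool), Γ.get? i = some (π, m) ∧ asBits m = some w}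

open Classical in
/-- The index of the last switch move (by `π`) of a run, when there are finitely
many and at least one (junk value `0` otherwise). -/
noncomputable def lastSwitchIdxP (π : Player) (Γ : Run) : ℕ :=
  if h : (SwSetP π Γ).Finite ∧ (SwSetP π Γ).Nonempty then
    h.1.toFinset.max' (h.1.toFinset_nonempty.mpr h.2)
  else 0

open Classical in
/-- The bitstring of the last switch move (by `π`) of a run; the empty bitstring
if there are no switch moves (or infinitely many). -/
noncomputable def lastSwitchBitsP (π : Player) (Γ : Run) : List Bool :=
  if (SwSetP π Γ).Finite ∧ (SwSetP π Γ).Nonempty then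
    ((Γ.get? (lastSwitchIdxP π Γ)).bind (fun lm => asBits lm.2)).getD []
  else []

/-- The infinite bitstring `t`: the last (`⊥`-made) switch move of `Γ` with
infinitely many `0`s appended, or the infinite string of `0`s if there are no
switch moves. -/
noncomputable def tStream (Γ : Run) : IStr := ezero (lastSwitchBitsP .bot Γ)

open Classical in
/-- The tight toggling-branching recurrence `⫰ᵀA`. -/
noncomputable def tight (A : Game) : Game where
  legal Γ := ∀ n : ℕ, TightLegalPos A (Stream'.Seq.take n Γ)
  wins Γ :=
    if (SwSetP .bot Γ).Finite ∧ A.won .bot (subAt (tStream Γ) Γ) then .bot else .top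

/-- The tight toggling-branching corecurrence `⫯ᵀA = ¬⫰ᵀ¬A`. -/
noncomputable def cotight (A : Game) : Game := Game.neg (tight (Game.neg A))

/-- The shape of legal labmoves of `⫰ᴸA`: `⊥w` (a switch move) for a bitstring
`w`, or `πw.α`. -/
def LooseShape (lm : Labmove) : Prop :=
  (lm.1 = .bot ∧ ∃ w : List Bool, asBits lm.2 = some w) ∨
  (∃ (w : List Bool) (α : Move), splitDot lm.2 = some (w, α))

open Classical in
/-- The loose toggling-branching recurrence `⫰ᴸA`. -/
noncomputable def loose (A : Game) : Game where
  legal Γ := (∀ (i : ℕ) (lm : Labmove), Γ.get? i = some lm → LooseShape lm) ∧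
    ∀ v : IStr, A.legal (subAt v Γ)
  wins Γ :=
    if (SwSetP .bot Γ).Finite ∧ A.won .bot (subAt (tStream Γ) Γ) then .bot else .top

/-- The loose toggling-branching corecurrence `⫯ᴸA = ¬⫰ᴸ¬A`. -/
noncomputable def coloose (A : Game) : Game := Game.neg (loose (Game.neg A))

/-- The sequence of (bitstrings of) switch moves made by `π` in a run, in order. -/
noncomputable def swSeq (π : Player) (Γ : Run) : Stream'.Seq (List Bool) :=
  seqFilterMap (fun lm => if lm.1 = π then asBits lm.2 else none) Γ

/-- The move `i.α` (component prefix for parallel combinations). -/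
def compMove (i : ℕ) (α : Move) : Move := .ch i :: .dot :: α

/-- `Δ^{i.}`: the labmoves of the form `π i.α` of `Δ`, with the prefix `i.` removed. -/
noncomputable def proj (i : ℕ) (Δ : Run) : Run :=
  seqFilterMap (fun lm =>
    match lm.2 with
    | .ch j :: .dot :: α => if j = i then some (lm.1, α) else none
    | _ => none) Δ

open Classical in
/-- The parallel disjunction `A ∨ B`. -/
noncomputable def Game.por (A B : Game) : Game where
  legal Δ :=
    (∀ (k : ℕ) (lm : Labmove), Δ.get? k = some lm →
      ∃ (i : ℕ) (α : Move), (i = 1 ∨ i = 2) ∧ lm.2 = compMove i α) ∧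
    A.legal (proj 1 Δ) ∧ B.legal (proj 2 Δ)
  wins Δ :=
    if A.won .top (proj 1 Δ) ∨ B.won .top (proj 2 Δ) then .top else .bot

/-!
Deleting from a run the labmoves that are not of the form `π u.α` with `u ≼ v` decides each
labmove on its own and never changes a label, so it commutes with extracting the
`π'`-labeled subsequence; this is condition (1). For condition (2), the `n`-th `π`-labeled
move of `Ω^{≼v}` comes from the `m`-th `π`-labeled move of `Ω`, where `m` is the index of the
`n`-th surviving move of the `π`-subsequence of `Ω`, so `m` depends only on that subsequence,
which `Γ` and `Δ` share. Since `Ω^{≼v}` keeps the surviving moves in their order, each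
comparison in (2) passes from `Γ^{≼v}` to `Γ`, through the delay to `Δ`, and back to `Δ^{≼v}`.
-/

section Nth

open Classical

variable {p K T : ℕ → Prop}

lemma hasNth_count {x : ℕ} (hx : p x) : HasNth p (Nat.count p x) :=
  fun hf => Nat.count_lt_card hf hx

lemma nth_lt_nth_iff_of_hasNth {m n : ℕ} (hm : HasNth p m) (hn : HasNth p n) :
    Nat.nth p m < Nat.nth p n ↔ m < n :=
  ⟨fun h => lt_of_not_ge fun hnm => (Nat.nth_le_nth' hnm hm).not_gt h,
    fun h => Nat.nth_lt_nth' h hn⟩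

lemma nth_inj_of_hasNth {m n : ℕ} (hm : HasNth p m) (hn : HasNth p n)
    (h : Nat.nth p m = Nat.nth p n) : m = n := by
  rcases lt_trichotomy m n with hmn | rfl | hnm
  · exact absurd h (Nat.nth_lt_nth' hmn hn).ne
  · rfl
  · exact absurd h (Nat.nth_lt_nth' hnm hm).ne'

/-- Guarded by `HasNth K i`, beyond which `Nat.nth K i` is a junk value. -/
def nthPreimage (K T : ℕ → Prop) (i : ℕ) : Prop := HasNth K i ∧ T (Nat.nth K i)

lemma count_nthPreimage (hTK : ∀ i, T i → K i) {j : ℕ} (hj : HasNth K j) :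
    Nat.count (nthPreimage K T) j = Nat.count T (Nat.nth K j) := by
  simp only [Nat.count_eq_card_filter_range]
  refine Finset.card_bij (fun i _ => Nat.nth K i) ?_ ?_ ?_
  · simp only [Finset.mem_filter, Finset.mem_range]
    rintro i ⟨hij, -, hT⟩
    exact ⟨Nat.nth_lt_nth' hij hj, hT⟩
  · simp only [Finset.mem_filter, Finset.mem_range]
    rintro i ⟨-, hi, -⟩ i' ⟨-, hi', -⟩ h
    exact nth_inj_of_hasNth hi hi' h
  · simp only [Finset.mem_filter, Finset.mem_range]
    rintro x ⟨hxj, hTx⟩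
    have hKx := hTK x hTx
    have hc := hasNth_count hKx
    refine ⟨Nat.count K x, ⟨?_, hc, by rwa [Nat.nth_count hKx]⟩, Nat.nth_count hKx⟩
    rwa [← nth_lt_nth_iff_of_hasNth hc hj, Nat.nth_count hKx]

lemma count_nth_nthPreimage (hTK : ∀ i, T i → K i) {n : ℕ}
    (hn : HasNth (nthPreimage K T) n) :
    Nat.count T (Nat.nth K (Nat.nth (nthPreimage K T) n)) = n := by
  rw [← count_nthPreimage hTK (Nat.nth_mem n hn).1, Nat.count_nth hn]

lemma hasNth_nthPreimage_iff (hTK : ∀ i, T i → K i) {n : ℕ} :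
    HasNth (nthPreimage K T) n ↔ HasNth T n := by
  constructor
  · intro hn
    rw [← count_nth_nthPreimage hTK hn]
    exact hasNth_count (Nat.nth_mem n hn).2
  · intro hn
    have hKx := hTK _ (Nat.nth_mem n hn)
    have hx : nthPreimage K T (Nat.count K (Nat.nth T n)) := by
      refine ⟨hasNth_count hKx, ?_⟩
      rw [Nat.nth_count hKx]
      exact Nat.nth_mem n hn
    have hcount := count_nthPreimage hTK hx.1
    rw [Nat.nth_count hKx, Nat.count_nth hn] at hcount
    rw [← hcount]
    exact hasNth_count hx

lemma nth_nth_nthPreimage (hTK : ∀ i, T i → K i) {n : ℕ}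
    (hn : HasNth (nthPreimage K T) n) :
    Nat.nth K (Nat.nth (nthPreimage K T) n) = Nat.nth T n := by
  conv_rhs => rw [← count_nth_nthPreimage hTK hn]
  exact (Nat.nth_count (Nat.nth_mem n hn).2).symm

end Nth

section FilterMap

open Classical

variable {α β γ : Type*}

lemma seqFilterMap_get? (p : α → Option β) (s : Stream'.Seq α) (k : ℕ) :
    (seqFilterMap p s).get? k =
      if HasNth (fmPred p s) k then (s.get? (Nat.nth (fmPred p s) k)).bind p else none :=
  rfl

lemma fmPred_of_fmPred_bind {p : β → Option γ} {q : α → Option β} {s : Stream'.Seq α}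
    {i : ℕ} (h : fmPred (fun a => (q a).bind p) s i) : fmPred q s i := by
  obtain ⟨a, ha, hqp⟩ := h
  exact ⟨a, ha, Option.isSome_of_isSome_bind hqp⟩

lemma fmPred_seqFilterMap (p : β → Option γ) (q : α → Option β) (s : Stream'.Seq α) :
    fmPred p (seqFilterMap q s) =
      nthPreimage (fmPred q s) (fmPred (fun a => (q a).bind p) s) := by
  ext j
  simp only [fmPred, nthPreimage, seqFilterMap_get?]
  by_cases h : HasNth (fmPred q s) j
  · simp only [h, if_true, true_and]
    rcases s.get? (Nat.nth (fmPred q s) j) with _ | a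
    · simp
    · rcases hq : q a with _ | b <;> simp [hq]
  · simp [h]

lemma seqFilterMap_seqFilterMap (p : β → Option γ) (q : α → Option β) (s : Stream'.Seq α) :
    seqFilterMap p (seqFilterMap q s) = seqFilterMap (fun a => (q a).bind p) s := by
  apply Stream'.Seq.ext
  intro k
  have hsub : ∀ i, fmPred (fun a => (q a).bind p) s i → fmPred q s i :=
    fun _ => fmPred_of_fmPred_bind
  rw [seqFilterMap_get? p, seqFilterMap_get? (fun a => (q a).bind p), fmPred_seqFilterMap]
  by_cases h : HasNth (nthPreimage (fmPred q s) (fmPred (fun a => (q a).bind p) s)) k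
  · rw [if_pos h, if_pos ((hasNth_nthPreimage_iff hsub).1 h), seqFilterMap_get? q,
      if_pos (Nat.nth_mem k h).1, nth_nth_nthPreimage hsub h, Option.bind_assoc]
  · rw [if_neg h, if_neg (mt (hasNth_nthPreimage_iff hsub).2 h)]

end FilterMap

lemma subFn_fst {v : IStr} {lm lm' : Labmove} (h : subFn v lm = some lm') : lm'.1 = lm.1 := by
  unfold subFn at h
  split at h
  · split at h
    · cases h; rfl
    · cases h
  · cases h

def labelFilter (π : Player) (lm : Labmove) : Option Labmove := if lm.1 = π then some lm else none

section Runs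

variable (v : IStr) (π : Player) (Θ : Run)

lemma subseqOf_eq_seqFilterMap : subseqOf π Θ = seqFilterMap (labelFilter π) Θ := rfl

lemma fmPred_labelFilter : fmPred (labelFilter π) Θ = labPred π Θ := by
  ext i
  constructor
  · rintro ⟨⟨π', m⟩, hm, hπ'⟩
    obtain rfl : π' = π := by by_contra h; simp [labelFilter, h] at hπ'
    exact ⟨m, hm⟩
  · rintro ⟨m, hm⟩
    exact ⟨(π, m), hm, by simp [labelFilter]⟩

lemma subFn_bind_labelFilter :
    (fun lm => (subFn v lm).bind (labelFilter π)) =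
      fun lm => (labelFilter π lm).bind (subFn v) := by
  funext lm
  rcases h : subFn v lm with _ | lm'
  · by_cases hπ : lm.1 = π <;> simp [labelFilter, hπ, h]
  · by_cases hπ : lm.1 = π <;> simp [labelFilter, subFn_fst h, hπ, h]

lemma fmPred_labelFilter_bind_subFn :
    fmPred (fun lm => (labelFilter π lm).bind (subFn v)) Θ =
      fmPred (subFn v) Θ ⊓ labPred π Θ := by
  ext i
  simp only [fmPred, labPred, Pi.inf_apply, inf_Prop_eq]
  constructor
  · rintro ⟨⟨π', m⟩, hm, h⟩
    obtain rfl : π' = π := by by_contra hπ; simp [labelFilter, hπ] at h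
    exact ⟨⟨_, hm, by simpa [labelFilter] using h⟩, m, hm⟩
  · rintro ⟨⟨a, ha, h⟩, m, hm⟩
    obtain rfl : a = (π, m) := Option.some.inj (ha.symm.trans hm)
    exact ⟨_, ha, by simpa [labelFilter] using h⟩

lemma subseqOf_subAt : subseqOf π (subAt v Θ) = subAt v (subseqOf π Θ) := by
  rw [subseqOf_eq_seqFilterMap, subAt, seqFilterMap_seqFilterMap, subFn_bind_labelFilter,
    subseqOf_eq_seqFilterMap, subAt, seqFilterMap_seqFilterMap]

lemma labPred_subAt :
    labPred π (subAt v Θ) =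
      nthPreimage (fmPred (subFn v) Θ) (fmPred (subFn v) Θ ⊓ labPred π Θ) := by
  rw [← fmPred_labelFilter, subAt, fmPred_seqFilterMap, subFn_bind_labelFilter,
    fmPred_labelFilter_bind_subFn]

lemma fmPred_subFn_subseqOf :
    fmPred (subFn v) (subseqOf π Θ) =
      nthPreimage (labPred π Θ) (fmPred (subFn v) Θ ⊓ labPred π Θ) := by
  rw [subseqOf_eq_seqFilterMap, fmPred_seqFilterMap, fmPred_labelFilter,
    fmPred_labelFilter_bind_subFn]

variable {v π Θ} {n : ℕ}

lemma hasNth_labPred_subAt_iff :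
    HasNth (labPred π (subAt v Θ)) n ↔ HasNth (fmPred (subFn v) (subseqOf π Θ)) n := by
  rw [labPred_subAt, fmPred_subFn_subseqOf, hasNth_nthPreimage_iff fun _ h => h.1,
    hasNth_nthPreimage_iff fun _ h => h.2]

lemma hasNth_fmPred_subFn_nth_labPred_subAt (hn : HasNth (labPred π (subAt v Θ)) n) :
    HasNth (fmPred (subFn v) Θ) (Nat.nth (labPred π (subAt v Θ)) n) := by
  rw [labPred_subAt] at hn ⊢
  exact (Nat.nth_mem n hn).1

lemma hasNth_labPred_nth_fmPred_subFn_subseqOf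
    (hn : HasNth (fmPred (subFn v) (subseqOf π Θ)) n) :
    HasNth (labPred π Θ) (Nat.nth (fmPred (subFn v) (subseqOf π Θ)) n) := by
  rw [fmPred_subFn_subseqOf] at hn ⊢
  exact (Nat.nth_mem n hn).1

lemma nth_fmPred_subFn_nth_labPred_subAt (hn : HasNth (labPred π (subAt v Θ)) n) :
    Nat.nth (fmPred (subFn v) Θ) (Nat.nth (labPred π (subAt v Θ)) n) =
      Nat.nth (labPred π Θ) (Nat.nth (fmPred (subFn v) (subseqOf π Θ)) n) := by
  have hm := hasNth_labPred_subAt_iff.1 hn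
  rw [labPred_subAt] at hn ⊢
  rw [fmPred_subFn_subseqOf] at hm ⊢
  rw [nth_nth_nthPreimage (fun _ h => h.1) hn, nth_nth_nthPreimage (fun _ h => h.2) hm]

lemma nth_labPred_subAt_lt_iff {π' : Player} {k : ℕ} (hk : HasNth (labPred π' (subAt v Θ)) k)
    (hn : HasNth (labPred π (subAt v Θ)) n) :
    Nat.nth (labPred π' (subAt v Θ)) k < Nat.nth (labPred π (subAt v Θ)) n ↔
      Nat.nth (labPred π' Θ) (Nat.nth (fmPred (subFn v) (subseqOf π' Θ)) k) <
        Nat.nth (labPred π Θ) (Nat.nth (fmPred (subFn v) (subseqOf π Θ)) n) := by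
  rw [← nth_fmPred_subFn_nth_labPred_subAt hk, ← nth_fmPred_subFn_nth_labPred_subAt hn,
    nth_lt_nth_iff_of_hasNth (hasNth_fmPred_subFn_nth_labPred_subAt hk)
      (hasNth_fmPred_subFn_nth_labPred_subAt hn)]

end Runs

/-- If `Δ` is a `π`-delay of `Γ`, then for every infinite bitstring `v`,
`Δ^{≼v}` is a `π`-delay of `Γ^{≼v}`. -/
theorem subAt_delay (π : Player) (Γ Δ : Run) (hd : Delay π Δ Γ) (v : IStr) :
    Delay π (subAt v Δ) (subAt v Γ) := by
  obtain ⟨hsub, hord⟩ := hd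
  have hsurv (π' : Player) :
      fmPred (subFn v) (subseqOf π' Δ) = fmPred (subFn v) (subseqOf π' Γ) := by
    rw [hsub]
  refine ⟨fun π' => by rw [subseqOf_subAt, subseqOf_subAt, hsub], fun n k hn hk hlt => ?_⟩
  have hnΔ : HasNth (labPred π (subAt v Δ)) n := by
    rwa [hasNth_labPred_subAt_iff, hsurv, ← hasNth_labPred_subAt_iff]
  have hkΔ : HasNth (labPred π.opp (subAt v Δ)) k := by
    rwa [hasNth_labPred_subAt_iff, hsurv, ← hasNth_labPred_subAt_iff]
  rw [gt_iff_lt, nth_labPred_subAt_lt_iff hk hn] at hlt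
  rw [gt_iff_lt, nth_labPred_subAt_lt_iff hkΔ hnΔ, hsurv, hsurv]
  exact hord _ _
    (hasNth_labPred_nth_fmPred_subFn_subseqOf (hasNth_labPred_subAt_iff.1 hn))
    (hasNth_labPred_nth_fmPred_subFn_subseqOf (hasNth_labPred_subAt_iff.1 hk)) hlt
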